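/- arXiv:2111.03218 — 13 statements merged into one kernel-verified Lean document; each statement's English description precedes it below -/
import Mathlib

section
/- Let M_hh be the 3×3 real matrix [[τξ₁, τξ₃ᵖ, −ρ_f⁻¹ξ₃ᶠ], [2μ_sξ₁² − ρ_sτ², 2μ_sξ₁ξ₃ᵖ, 0], [2μ_sξ₁ξ₃ˢ, −2μ_sξ₁² + ρ_sτ², τ]]. Then det M_hh > 0; in particular M_hh is invertible, so the hyperbolic-hyperbolic transmission system is uniquely solvable at the principal symbol level. -/
/-- The hyperbolic-hyperbolic transmission matrix has positive
determinant, hence is invertible. -/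
theorem det_hyperbolic_hyperbolic_pos
    (lams mus rhos lamf rhof : ℝ)
    (hlams : 0 < lams) (hmus : 0 < mus) (hrhos : 0 < rhos)
    (hlamf : 0 < lamf) (hrhof : 0 < rhof)
    (cs cp cf : ℝ)
    (hcs : cs = Real.sqrt (mus / rhos))
    (hcp : cp = Real.sqrt ((lams + 2 * mus) / rhos))
    (hcf : cf = Real.sqrt (lamf / rhof))
    (ξ1 τ : ℝ) (hτ : τ ≠ 0)
    (hhp : cp ^ 2 * ξ1 ^ 2 < τ ^ 2)
    (hhf : cf ^ 2 * ξ1 ^ 2 < τ ^ 2)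
    (ξ3s ξ3p ξ3f : ℝ)
    (hξ3s : ξ3s = Real.sqrt (τ ^ 2 / cs ^ 2 - ξ1 ^ 2))
    (hξ3p : ξ3p = Real.sqrt (τ ^ 2 / cp ^ 2 - ξ1 ^ 2))
    (hξ3f : ξ3f = Real.sqrt (τ ^ 2 / cf ^ 2 - ξ1 ^ 2)) :
    0 < (!![τ * ξ1, τ * ξ3p, -(rhof⁻¹ * ξ3f);
            2 * mus * ξ1 ^ 2 - rhos * τ ^ 2, 2 * mus * ξ1 * ξ3p, 0;
            2 * mus * ξ1 * ξ3s, -(2 * mus * ξ1 ^ 2) + rhos * τ ^ 2, τ] :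
          Matrix (Fin 3) (Fin 3) ℝ).det
    ∧ IsUnit (!![τ * ξ1, τ * ξ3p, -(rhof⁻¹ * ξ3f);
            2 * mus * ξ1 ^ 2 - rhos * τ ^ 2, 2 * mus * ξ1 * ξ3p, 0;
            2 * mus * ξ1 * ξ3s, -(2 * mus * ξ1 ^ 2) + rhos * τ ^ 2, τ] :
          Matrix (Fin 3) (Fin 3) ℝ) := by
  have hcp2 : cp ^ 2 = (lams + 2 * mus) / rhos := by
    rw [hcp, Real.sq_sqrt (by positivity)]
  have hcp2pos : 0 < cp ^ 2 := by rw [hcp2]; positivity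
  have hξ3p_pos : 0 < ξ3p := by
    rw [hξ3p, Real.sqrt_pos]
    rw [sub_pos, lt_div_iff₀ hcp2pos]
    linarith [hhp]
  have hξ3s_nonneg : 0 ≤ ξ3s := hξ3s ▸ Real.sqrt_nonneg _
  have hξ3f_nonneg : 0 ≤ ξ3f := hξ3f ▸ Real.sqrt_nonneg _
  have hτ2 : 0 < τ ^ 2 := by positivity
  have hdet : 0 < (!![τ * ξ1, τ * ξ3p, -(rhof⁻¹ * ξ3f);
            2 * mus * ξ1 ^ 2 - rhos * τ ^ 2, 2 * mus * ξ1 * ξ3p, 0;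
            2 * mus * ξ1 * ξ3s, -(2 * mus * ξ1 ^ 2) + rhos * τ ^ 2, τ] :
          Matrix (Fin 3) (Fin 3) ℝ).det := by
    simp [Matrix.det_fin_three]
    have h1 : 0 < rhos * τ ^ 4 * ξ3p := by positivity
    have h2 : 0 ≤ rhof⁻¹ * ξ3f * ((2 * mus * ξ1 ^ 2 - rhos * τ ^ 2) ^ 2
        + 4 * mus ^ 2 * ξ1 ^ 2 * ξ3p * ξ3s) := by positivity
    nlinarith [h1, h2]
  exact ⟨hdet, (Matrix.isUnit_iff_isUnit_det _).mpr (isUnit_iff_ne_zero.mpr hdet.ne')⟩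
end

section
/- Let A be the 4×4 complex matrix [[0, −iτξ₁, −iτξ₃ᵖ, iρ_f⁻¹ξ₃ᶠ], [0, −i(2μ_sξ₁² − ρ_sτ²), −2iμ_sξ₁ξ₃ᵖ, 0], [i(μ_sξ₁² − ρ_sτ²), 0, 0, 0], [0, −2iμ_sξ₁ξ₃ˢ, i(2μ_sξ₁² − ρ_sτ²), −iτ]] (the Douglis–Nirenberg principal symbol of the outgoing hyperbolic-hyperbolic transmission operator). Then det A = (ρ_sτ² − μ_sξ₁²)·(τ⁴ρ_sξ₃ᵖ + ρ_f⁻¹ξ₃ᶠ((2μ_sξ₁² − ρ_sτ²)² + 4μ_s²ξ₁²ξ₃ˢξ₃ᵖ)); since ρ_sτ² > μ_sξ₁² in this region, A is invertible. -/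
open Complex

/-! Expanding along the third row, whose only nonzero entry is `i(μ_s ξ₁² - ρ_s τ²)`, leaves a
3 × 3 determinant; since every entry is `i` times a real number, the four factors of each term
contribute `i⁴ = 1`. The first factor is positive because `μ_s ≤ λ_s + 2μ_s = ρ_s c_p²` and
`c_p² ξ₁² < τ²`; the second is positive because `ξ₃ᵖ > 0` and all its other terms are
nonnegative. -/

theorem Matrix.det_fin_four_sparse {R : Type*} [CommRing R] (a b c d e f g h k : R) :
    !![0, a, b, c; 0, d, e, 0; f, 0, 0, 0; 0, g, h, k].det
      = f * (k * (a * e - b * d) + c * (d * h - e * g)) := by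
  simp [Matrix.det_succ_row_zero, Fin.sum_univ_succ, Fin.succAbove]
  ring

theorem shear_lt_of_pWave_hyperbolic {lams mus rhos cp ξ1 τ : ℝ} (hlm : 0 ≤ lams + mus)
    (hrhos : 0 < rhos) (hcp : cp ^ 2 = (lams + 2 * mus) / rhos) (h : cp ^ 2 * ξ1 ^ 2 < τ ^ 2) :
    mus * ξ1 ^ 2 < rhos * τ ^ 2 := by
  rw [hcp, div_mul_eq_mul_div, div_lt_iff₀ hrhos] at h
  nlinarith [sq_nonneg ξ1]

theorem Real.sqrt_div_sq_sub_sq_pos {c x t : ℝ} (hc : 0 < c ^ 2) (h : c ^ 2 * x ^ 2 < t ^ 2) :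
    0 < √(t ^ 2 / c ^ 2 - x ^ 2) := by
  rw [Real.sqrt_pos, sub_pos, lt_div_iff₀ hc]
  linarith

theorem det_DN_symbol_hyperbolic_hyperbolic_general
    (lams mus rhos rhof : ℝ)
    (hlams : 0 < lams) (hmus : 0 < mus) (hrhos : 0 < rhos)
    (hrhof : 0 < rhof)
    (cs cp cf : ℝ)
    (hcp : cp = Real.sqrt ((lams + 2 * mus) / rhos))
    (ξ1 τ : ℝ) (hτ : τ ≠ 0)
    (hhp : cp ^ 2 * ξ1 ^ 2 < τ ^ 2)
    (ξ3s ξ3p ξ3f : ℝ)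
    (hξ3s : ξ3s = Real.sqrt (τ ^ 2 / cs ^ 2 - ξ1 ^ 2))
    (hξ3p : ξ3p = Real.sqrt (τ ^ 2 / cp ^ 2 - ξ1 ^ 2))
    (hξ3f : ξ3f = Real.sqrt (τ ^ 2 / cf ^ 2 - ξ1 ^ 2))
    (A : Matrix (Fin 4) (Fin 4) ℂ)
    (hA : A = !![0, -(Complex.I * τ * ξ1), -(Complex.I * τ * ξ3p), Complex.I * rhof⁻¹ * ξ3f;
                 0, -(Complex.I * (2 * mus * ξ1 ^ 2 - rhos * τ ^ 2)),
                    -(2 * Complex.I * mus * ξ1 * ξ3p), 0;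
                 Complex.I * (mus * ξ1 ^ 2 - rhos * τ ^ 2), 0, 0, 0;
                 0, -(2 * Complex.I * mus * ξ1 * ξ3s),
                    Complex.I * (2 * mus * ξ1 ^ 2 - rhos * τ ^ 2), -(Complex.I * τ)]) :
    A.det = ((rhos * τ ^ 2 - mus * ξ1 ^ 2 : ℝ) : ℂ)
        * ((τ ^ 4 * rhos * ξ3p
            + rhof⁻¹ * ξ3f * ((2 * mus * ξ1 ^ 2 - rhos * τ ^ 2) ^ 2
                + 4 * mus ^ 2 * ξ1 ^ 2 * ξ3s * ξ3p) : ℝ) : ℂ)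
      ∧ mus * ξ1 ^ 2 < rhos * τ ^ 2
      ∧ IsUnit A := by
  have hcp2 : cp ^ 2 = (lams + 2 * mus) / rhos := by rw [hcp, Real.sq_sqrt (by positivity)]
  have hshear : mus * ξ1 ^ 2 < rhos * τ ^ 2 :=
    shear_lt_of_pWave_hyperbolic (by positivity) hrhos hcp2 hhp
  have hdet : A.det = ((rhos * τ ^ 2 - mus * ξ1 ^ 2 : ℝ) : ℂ)
      * ((τ ^ 4 * rhos * ξ3p
          + rhof⁻¹ * ξ3f * ((2 * mus * ξ1 ^ 2 - rhos * τ ^ 2) ^ 2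
              + 4 * mus ^ 2 * ξ1 ^ 2 * ξ3s * ξ3p) : ℝ) : ℂ) := by
    rw [hA, Matrix.det_fin_four_sparse]
    push_cast
    ring_nf
    rw [I_pow_four]
    ring
  have hξ3p_pos : 0 < ξ3p := hξ3p ▸ Real.sqrt_div_sq_sub_sq_pos (by rw [hcp2]; positivity) hhp
  have hξ3s_nonneg : 0 ≤ ξ3s := hξ3s ▸ Real.sqrt_nonneg _
  have hξ3f_nonneg : 0 ≤ ξ3f := hξ3f ▸ Real.sqrt_nonneg _
  have hfactor : 0 < τ ^ 4 * rhos * ξ3p + rhof⁻¹ * ξ3f * ((2 * mus * ξ1 ^ 2 - rhos * τ ^ 2) ^ 2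
      + 4 * mus ^ 2 * ξ1 ^ 2 * ξ3s * ξ3p) := by positivity
  refine ⟨hdet, hshear, ?_⟩
  rw [Matrix.isUnit_iff_isUnit_det, hdet, isUnit_iff_ne_zero]
  exact mul_ne_zero (ofReal_ne_zero.2 (sub_pos.2 hshear).ne') (ofReal_ne_zero.2 hfactor.ne')

/-- Determinant of the 4×4 Douglis–Nirenberg principal symbol of the
outgoing hyperbolic-hyperbolic transmission operator, and its invertibility. -/
theorem det_DN_symbol_hyperbolic_hyperbolic
    (lams mus rhos lamf rhof : ℝ)
    (hlams : 0 < lams) (hmus : 0 < mus) (hrhos : 0 < rhos)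
    (hlamf : 0 < lamf) (hrhof : 0 < rhof)
    (cs cp cf : ℝ)
    (hcs : cs = Real.sqrt (mus / rhos))
    (hcp : cp = Real.sqrt ((lams + 2 * mus) / rhos))
    (hcf : cf = Real.sqrt (lamf / rhof))
    (ξ1 τ : ℝ) (hτ : τ ≠ 0)
    (hhp : cp ^ 2 * ξ1 ^ 2 < τ ^ 2)
    (hhf : cf ^ 2 * ξ1 ^ 2 < τ ^ 2)
    (ξ3s ξ3p ξ3f : ℝ)
    (hξ3s : ξ3s = Real.sqrt (τ ^ 2 / cs ^ 2 - ξ1 ^ 2))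
    (hξ3p : ξ3p = Real.sqrt (τ ^ 2 / cp ^ 2 - ξ1 ^ 2))
    (hξ3f : ξ3f = Real.sqrt (τ ^ 2 / cf ^ 2 - ξ1 ^ 2))
    (A : Matrix (Fin 4) (Fin 4) ℂ)
    (hA : A = !![0, -(Complex.I * τ * ξ1), -(Complex.I * τ * ξ3p), Complex.I * rhof⁻¹ * ξ3f;
                 0, -(Complex.I * (2 * mus * ξ1 ^ 2 - rhos * τ ^ 2)),
                    -(2 * Complex.I * mus * ξ1 * ξ3p), 0;
                 Complex.I * (mus * ξ1 ^ 2 - rhos * τ ^ 2), 0, 0, 0;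
                 0, -(2 * Complex.I * mus * ξ1 * ξ3s),
                    Complex.I * (2 * mus * ξ1 ^ 2 - rhos * τ ^ 2), -(Complex.I * τ)]) :
    A.det = ((rhos * τ ^ 2 - mus * ξ1 ^ 2 : ℝ) : ℂ)
        * ((τ ^ 4 * rhos * ξ3p
            + rhof⁻¹ * ξ3f * ((2 * mus * ξ1 ^ 2 - rhos * τ ^ 2) ^ 2
                + 4 * mus ^ 2 * ξ1 ^ 2 * ξ3s * ξ3p) : ℝ) : ℂ)
      ∧ mus * ξ1 ^ 2 < rhos * τ ^ 2
      ∧ IsUnit A :=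
  det_DN_symbol_hyperbolic_hyperbolic_general lams mus rhos rhof hlams hmus hrhos hrhof cs cp cf hcp
    ξ1 τ hτ hhp ξ3s ξ3p ξ3f hξ3s hξ3p hξ3f A hA
end

section
/- Let M_mh be the 3×3 complex matrix [[τξ₁, 2τξ̃₃ᵖ, −ρ_f⁻¹ξ₃ᶠ], [2μ_sξ₁² − ρ_sτ², 4μ_sξ₁ξ̃₃ᵖ, 0], [2μ_sξ₁ξ₃ˢ, −4μ_sξ₁² + 2ρ_sτ², τ]]. Then det M_mh ≠ 0, i.e. M_mh is invertible; hence the mixed-hyperbolic transmission system is uniquely solvable at the principal symbol level. -/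
/-- The mixed-hyperbolic transmission matrix has nonzero determinant,
hence is invertible. -/
theorem det_mixed_hyperbolic_ne_zero
    (lams mus rhos lamf rhof : ℝ)
    (hlams : 0 < lams) (hmus : 0 < mus) (hrhos : 0 < rhos)
    (hlamf : 0 < lamf) (hrhof : 0 < rhof)
    (cs cp cf : ℝ)
    (hcs : cs = Real.sqrt (mus / rhos))
    (hcp : cp = Real.sqrt ((lams + 2 * mus) / rhos))
    (hcf : cf = Real.sqrt (lamf / rhof))
    (ξ1 τ : ℝ)
    (hmix1 : cs ^ 2 * ξ1 ^ 2 < τ ^ 2) (hmix2 : τ ^ 2 < cp ^ 2 * ξ1 ^ 2)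
    (hhf : cf ^ 2 * ξ1 ^ 2 < τ ^ 2)
    (hξ1 : ξ1 ≠ 0) (hτ : τ ≠ 0)
    (ξ3s ξ3f : ℝ)
    (hξ3s : ξ3s = Real.sqrt (τ ^ 2 / cs ^ 2 - ξ1 ^ 2))
    (hξ3f : ξ3f = Real.sqrt (τ ^ 2 / cf ^ 2 - ξ1 ^ 2))
    (tξ3p : ℂ)
    (htξ3p : tξ3p = Complex.I * Real.sqrt (ξ1 ^ 2 - τ ^ 2 / cp ^ 2))
    (M : Matrix (Fin 3) (Fin 3) ℂ)
    (hM : M = (!![τ * ξ1, 2 * τ * tξ3p, -(rhof⁻¹ * ξ3f);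
                 2 * mus * ξ1 ^ 2 - rhos * τ ^ 2, 4 * mus * ξ1 * tξ3p, 0;
                 2 * mus * ξ1 * ξ3s, -(4 * mus * ξ1 ^ 2) + 2 * rhos * τ ^ 2, τ]
        : Matrix (Fin 3) (Fin 3) ℂ)) :
    M.det ≠ 0 ∧ IsUnit M := by
  have hcp2 : cp ^ 2 = (lams + 2 * mus) / rhos := by
    rw [hcp, Real.sq_sqrt]
    positivity
  have hcp2pos : 0 < cp ^ 2 := by rw [hcp2]; positivity
  set s : ℝ := Real.sqrt (ξ1 ^ 2 - τ ^ 2 / cp ^ 2) with hs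
  have hspos : 0 < s := by
    apply Real.sqrt_pos.mpr
    have : τ ^ 2 / cp ^ 2 < ξ1 ^ 2 := by
      rw [div_lt_iff₀ hcp2pos]; linarith [hmix2]
    linarith
  have hξ3f0 : 0 ≤ ξ3f := hξ3f ▸ Real.sqrt_nonneg _
  have hξ3s0 : 0 ≤ ξ3s := hξ3s ▸ Real.sqrt_nonneg _
  set A : ℝ := 2 * rhof⁻¹ * ξ3f * (2 * mus * ξ1 ^ 2 - rhos * τ ^ 2) ^ 2 with hA
  set B : ℝ := s * (2 * rhos * τ ^ 4 + 8 * rhof⁻¹ * ξ3f * mus ^ 2 * ξ1 ^ 2 * ξ3s) with hB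
  have hBpos : 0 < B := by
    apply mul_pos hspos
    have h1 : 0 < 2 * rhos * τ ^ 4 := by positivity
    have h2 : 0 ≤ 8 * rhof⁻¹ * ξ3f * mus ^ 2 * ξ1 ^ 2 * ξ3s := by positivity
    linarith
  have hdet : M.det = (A : ℂ) + (B : ℂ) * Complex.I := by
    subst hM htξ3p
    simp only [Matrix.det_fin_three, Matrix.cons_val', Matrix.cons_val_zero, Matrix.empty_val',
      Matrix.cons_val_fin_one, Matrix.cons_val_one, Matrix.head_cons, Matrix.head_fin_const,
      Fin.isValue, Matrix.cons_val_two, Matrix.tail_cons, Matrix.tail_val', Matrix.head_val',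
      Matrix.of_apply]
    rw [hA, hB]
    push_cast
    ring
  have hdetne : M.det ≠ 0 := by
    rw [hdet]
    intro h
    have him := congrArg Complex.im h
    simp [Complex.add_im, Complex.ofReal_im, Complex.mul_im] at him
    exact absurd him (ne_of_gt hBpos)
  exact ⟨hdetne, (Matrix.isUnit_iff_isUnit_det M).mpr (isUnit_iff_ne_zero.mpr hdetne)⟩
end

section
/- If in addition ρ_sτ² = 2μ_sξ₁², then the determinant of the 3×3 complex matrix [[τξ₁, 2τξ̃₃ᵖ, −ρ_f⁻¹ξ₃ᶠ], [2μ_sξ₁² − ρ_sτ², 4μ_sξ₁ξ̃₃ᵖ, 0], [2μ_sξ₁ξ₃ˢ, −4μ_sξ₁² + 2ρ_sτ², τ]] is purely imaginary with imaginary part equal to 4μ_sξ₁²√(ξ₁² − τ²/c_p²)·(τ² + 2μ_sρ_f⁻¹ξ₃ᶠξ₃ˢ) > 0. -/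
/-- When ρ_sτ² = 2μ_sξ₁², the mixed-hyperbolic determinant is purely
imaginary with positive imaginary part. -/
theorem det_mixed_hyperbolic_purely_imaginary
    (lams mus rhos lamf rhof : ℝ)
    (hlams : 0 < lams) (hmus : 0 < mus) (hrhos : 0 < rhos)
    (hlamf : 0 < lamf) (hrhof : 0 < rhof)
    (cs cp cf : ℝ)
    (hcs : cs = Real.sqrt (mus / rhos))
    (hcp : cp = Real.sqrt ((lams + 2 * mus) / rhos))
    (hcf : cf = Real.sqrt (lamf / rhof))
    (ξ1 τ : ℝ)
    (hmix1 : cs ^ 2 * ξ1 ^ 2 < τ ^ 2) (hmix2 : τ ^ 2 < cp ^ 2 * ξ1 ^ 2)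
    (hhf : cf ^ 2 * ξ1 ^ 2 < τ ^ 2)
    (hξ1 : ξ1 ≠ 0) (hτ : τ ≠ 0)
    (ξ3s ξ3f : ℝ)
    (hξ3s : ξ3s = Real.sqrt (τ ^ 2 / cs ^ 2 - ξ1 ^ 2))
    (hξ3f : ξ3f = Real.sqrt (τ ^ 2 / cf ^ 2 - ξ1 ^ 2))
    (tξ3p : ℂ)
    (htξ3p : tξ3p = Complex.I * Real.sqrt (ξ1 ^ 2 - τ ^ 2 / cp ^ 2))
    (hcrit : rhos * τ ^ 2 = 2 * mus * ξ1 ^ 2)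
    (M : Matrix (Fin 3) (Fin 3) ℂ)
    (hM : M = (!![τ * ξ1, 2 * τ * tξ3p, -(rhof⁻¹ * ξ3f);
                 2 * mus * ξ1 ^ 2 - rhos * τ ^ 2, 4 * mus * ξ1 * tξ3p, 0;
                 2 * mus * ξ1 * ξ3s, -(4 * mus * ξ1 ^ 2) + 2 * rhos * τ ^ 2, τ]
        : Matrix (Fin 3) (Fin 3) ℂ)) :
    M.det.re = 0
      ∧ M.det.im = 4 * mus * ξ1 ^ 2 * Real.sqrt (ξ1 ^ 2 - τ ^ 2 / cp ^ 2)
          * (τ ^ 2 + 2 * mus * rhof⁻¹ * ξ3f * ξ3s)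
      ∧ 0 < M.det.im := by
  set s : ℝ := Real.sqrt (ξ1 ^ 2 - τ ^ 2 / cp ^ 2) with hs
  have hc : ((rhos : ℂ) * τ ^ 2) = 2 * mus * ξ1 ^ 2 := by exact_mod_cast hcrit
  have key : M.det = Complex.I *
      ((4 * mus * ξ1 ^ 2 * s * (τ ^ 2 + 2 * mus * rhof⁻¹ * ξ3f * ξ3s) : ℝ) : ℂ) := by
    subst hM
    rw [Matrix.det_fin_three]
    simp only [Matrix.cons_val', Matrix.cons_val_zero, Matrix.cons_val_one,
      Matrix.head_cons, Matrix.head_fin_const, Matrix.empty_val',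
      Matrix.cons_val_fin_one, Matrix.cons_val_two, Matrix.tail_cons, Matrix.of_apply]
    rw [htξ3p]
    push_cast
    linear_combination (2 * (τ : ℂ) ^ 2 * (Complex.I * (s : ℂ))
      - 2 * (rhof : ℂ)⁻¹ * ξ3f * (2 * mus * ξ1 ^ 2 - rhos * τ ^ 2)) * hc
  have hre : M.det.re = 0 := by
    rw [key]
    simp only [Complex.mul_re, Complex.I_re, Complex.I_im, Complex.ofReal_re,
      Complex.ofReal_im]
    ring
  have him : M.det.im = 4 * mus * ξ1 ^ 2 * s * (τ ^ 2 + 2 * mus * rhof⁻¹ * ξ3f * ξ3s) := by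
    rw [key]
    simp only [Complex.mul_im, Complex.I_re, Complex.I_im, Complex.ofReal_re,
      Complex.ofReal_im]
    ring
  refine ⟨hre, him, ?_⟩
  rw [him]
  have hcp2 : cp ^ 2 = (lams + 2 * mus) / rhos := by
    rw [hcp, Real.sq_sqrt (by positivity)]
  have hcp2pos : 0 < cp ^ 2 := by rw [hcp2]; positivity
  have hspos : 0 < s := by
    apply Real.sqrt_pos.mpr
    have : τ ^ 2 / cp ^ 2 < ξ1 ^ 2 := by
      rw [div_lt_iff₀ hcp2pos]; linarith [hmix2]
    linarith
  have hξ3snn : 0 ≤ ξ3s := hξ3s ▸ Real.sqrt_nonneg _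
  have hξ3fnn : 0 ≤ ξ3f := hξ3f ▸ Real.sqrt_nonneg _
  have hτ2 : 0 < τ ^ 2 := by positivity
  have hξ12 : 0 < ξ1 ^ 2 := by positivity
  have : 0 ≤ 2 * mus * rhof⁻¹ * ξ3f * ξ3s := by positivity
  positivity
end

section
/- The determinant of the 3×3 complex matrix [[τξ₁, 2τξ̃₃ᵖ, τξ₁], [2μ_sξ₁² − ρ_sτ², 4μ_sξ₁ξ̃₃ᵖ, 2μ_sξ₁² − ρ_sτ²], [2μ_sξ₁ξ₃ˢ, −4μ_sξ₁² + 2ρ_sτ², −2μ_sξ₁ξ₃ˢ]] equals −8μ_sρ_sτ³ξ₁ξ₃ˢξ̃₃ᵖ, which is nonzero in the mixed-hyperbolic region; hence the system producing a prescribed acoustic wave in the fluid from shear waves in the solid (with creation of an evanescent p wave) is uniquely solvable at the principal symbol level. -/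
/-- Determinant of the matrix producing a prescribed acoustic wave in
the fluid from shear waves in the solid, in the mixed-hyperbolic region. -/
theorem det_mh_control_fluid_from_solid
    (lams mus rhos lamf rhof : ℝ)
    (hlams : 0 < lams) (hmus : 0 < mus) (hrhos : 0 < rhos)
    (hlamf : 0 < lamf) (hrhof : 0 < rhof)
    (cs cp cf : ℝ)
    (hcs : cs = Real.sqrt (mus / rhos))
    (hcp : cp = Real.sqrt ((lams + 2 * mus) / rhos))
    (hcf : cf = Real.sqrt (lamf / rhof))
    (ξ1 τ : ℝ)
    (hmix1 : cs ^ 2 * ξ1 ^ 2 < τ ^ 2) (hmix2 : τ ^ 2 < cp ^ 2 * ξ1 ^ 2)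
    (hhf : cf ^ 2 * ξ1 ^ 2 < τ ^ 2)
    (hξ1 : ξ1 ≠ 0) (hτ : τ ≠ 0)
    (ξ3s ξ3f : ℝ)
    (hξ3s : ξ3s = Real.sqrt (τ ^ 2 / cs ^ 2 - ξ1 ^ 2))
    (hξ3f : ξ3f = Real.sqrt (τ ^ 2 / cf ^ 2 - ξ1 ^ 2))
    (tξ3p : ℂ)
    (htξ3p : tξ3p = Complex.I * Real.sqrt (ξ1 ^ 2 - τ ^ 2 / cp ^ 2))
    (M : Matrix (Fin 3) (Fin 3) ℂ)
    (hM : M = (!![τ * ξ1, 2 * τ * tξ3p, τ * ξ1;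
                 2 * mus * ξ1 ^ 2 - rhos * τ ^ 2, 4 * mus * ξ1 * tξ3p,
                   2 * mus * ξ1 ^ 2 - rhos * τ ^ 2;
                 2 * mus * ξ1 * ξ3s, -(4 * mus * ξ1 ^ 2) + 2 * rhos * τ ^ 2,
                   -(2 * mus * ξ1 * ξ3s)] : Matrix (Fin 3) (Fin 3) ℂ)) :
    M.det = -(8 * (mus : ℂ) * rhos * (τ : ℂ) ^ 3 * ξ1 * ξ3s * tξ3p)
      ∧ M.det ≠ 0 := by
  have hdet : M.det = -(8 * (mus : ℂ) * rhos * (τ : ℂ) ^ 3 * ξ1 * ξ3s * tξ3p) := by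
    subst hM
    rw [Matrix.det_fin_three]
    simp [Matrix.cons_val_zero, Matrix.cons_val_one]
    ring
  refine ⟨hdet, hdet ▸ ?_⟩
  have hcs2 : cs ^ 2 = mus / rhos := by
    rw [hcs, Real.sq_sqrt (le_of_lt (div_pos hmus hrhos))]
  have hcs2pos : 0 < cs ^ 2 := hcs2 ▸ div_pos hmus hrhos
  have hcp2 : cp ^ 2 = (lams + 2 * mus) / rhos := by
    rw [hcp, Real.sq_sqrt (le_of_lt (div_pos (by linarith) hrhos))]
  have hcp2pos : 0 < cp ^ 2 := hcp2 ▸ div_pos (by linarith) hrhos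
  have hξ3spos : 0 < ξ3s := by
    rw [hξ3s]
    apply Real.sqrt_pos.mpr
    rw [sub_pos, lt_div_iff₀ hcs2pos]
    linarith
  have htpos : tξ3p ≠ 0 := by
    rw [htξ3p]
    apply mul_ne_zero Complex.I_ne_zero
    have : 0 < ξ1 ^ 2 - τ ^ 2 / cp ^ 2 := by
      rw [sub_pos, div_lt_iff₀ hcp2pos]
      linarith
    simp only [ne_eq, Complex.ofReal_eq_zero]
    positivity
  have h8 : (8 : ℂ) * mus * rhos * τ ^ 3 * ξ1 * ξ3s ≠ 0 := by
    have := hξ3spos.ne'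
    simp only [ne_eq, mul_eq_zero]
    push_cast
    push_neg
    refine ⟨⟨⟨⟨⟨by norm_num, ?_⟩, ?_⟩, ?_⟩, ?_⟩, ?_⟩ <;>
      simp_all [pow_eq_zero_iff, Complex.ofReal_eq_zero] <;> positivity
  exact fun h => (mul_ne_zero h8 htpos) (neg_eq_zero.mp h)
end

section
/- The determinant of the 3×3 complex matrix [[−ρ_f⁻¹ξ₃ᶠ, ρ_f⁻¹ξ₃ᶠ, −2τξ̃₃ᵖ], [0, 0, −4μ_sξ₁ξ̃₃ᵖ], [−τ, −τ, 4μ_sξ₁² − 2ρ_sτ²]] equals 8ρ_f⁻¹μ_sτξ₁ξ₃ᶠξ̃₃ᵖ, which is nonzero in the mixed-hyperbolic region; hence the microlocal shear vertical waves in the solid can be controlled from the fluid side at the principal symbol level. -/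
/-- Determinant of the matrix controlling the microlocal shear vertical
waves from the fluid side in the mixed-hyperbolic region, and its nonvanishing. -/
theorem det_mh_control_solid_from_fluid
    (lams mus rhos lamf rhof : ℝ)
    (hlams : 0 < lams) (hmus : 0 < mus) (hrhos : 0 < rhos)
    (hlamf : 0 < lamf) (hrhof : 0 < rhof)
    (cs cp cf : ℝ)
    (hcs : cs = Real.sqrt (mus / rhos))
    (hcp : cp = Real.sqrt ((lams + 2 * mus) / rhos))
    (hcf : cf = Real.sqrt (lamf / rhof))
    (ξ1 τ : ℝ)
    (hmix1 : cs ^ 2 * ξ1 ^ 2 < τ ^ 2) (hmix2 : τ ^ 2 < cp ^ 2 * ξ1 ^ 2)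
    (hhf : cf ^ 2 * ξ1 ^ 2 < τ ^ 2)
    (hξ1 : ξ1 ≠ 0) (hτ : τ ≠ 0)
    (ξ3s ξ3f : ℝ)
    (hξ3s : ξ3s = Real.sqrt (τ ^ 2 / cs ^ 2 - ξ1 ^ 2))
    (hξ3f : ξ3f = Real.sqrt (τ ^ 2 / cf ^ 2 - ξ1 ^ 2))
    (tξ3p : ℂ)
    (htξ3p : tξ3p = Complex.I * Real.sqrt (ξ1 ^ 2 - τ ^ 2 / cp ^ 2))
    (M : Matrix (Fin 3) (Fin 3) ℂ)
    (hM : M = (!![-(rhof⁻¹ * ξ3f), rhof⁻¹ * ξ3f, -(2 * τ * tξ3p);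
                 0, 0, -(4 * mus * ξ1 * tξ3p);
                 -τ, -τ, 4 * mus * ξ1 ^ 2 - 2 * rhos * τ ^ 2]
        : Matrix (Fin 3) (Fin 3) ℂ)) :
    M.det = 8 * (rhof : ℂ)⁻¹ * mus * τ * ξ1 * ξ3f * tξ3p
      ∧ M.det ≠ 0 := by
  have hdet : M.det = 8 * (rhof : ℂ)⁻¹ * mus * τ * ξ1 * ξ3f * tξ3p := by
    rw [hM, Matrix.det_fin_three]
    simp [Matrix.cons_val_zero, Matrix.cons_val_one]
    ring
  refine ⟨hdet, ?_⟩
  rw [hdet]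
  have hcf2 : cf ^ 2 = lamf / rhof := by
    rw [hcf, Real.sq_sqrt (le_of_lt (div_pos hlamf hrhof))]
  have hcp2 : cp ^ 2 = (lams + 2 * mus) / rhos := by
    rw [hcp, Real.sq_sqrt (le_of_lt (div_pos (by linarith) hrhos))]
  have hcfpos : 0 < cf ^ 2 := hcf2 ▸ div_pos hlamf hrhof
  have hcppos : 0 < cp ^ 2 := hcp2 ▸ div_pos (by linarith) hrhos
  have hf : 0 < τ ^ 2 / cf ^ 2 - ξ1 ^ 2 := by
    rw [sub_pos, lt_div_iff₀ hcfpos]; linarith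
  have hp : 0 < ξ1 ^ 2 - τ ^ 2 / cp ^ 2 := by
    rw [sub_pos, div_lt_iff₀ hcppos]; linarith
  have hξ3f0 : ξ3f ≠ 0 := by
    rw [hξ3f]; exact ne_of_gt (Real.sqrt_pos.mpr hf)
  have htp0 : tξ3p ≠ 0 := by
    rw [htξ3p]
    refine mul_ne_zero Complex.I_ne_zero ?_
    exact_mod_cast ne_of_gt (Real.sqrt_pos.mpr hp)
  have h1 : (rhof : ℂ)⁻¹ ≠ 0 := inv_ne_zero (by exact_mod_cast ne_of_gt hrhof)
  have h2 : (mus : ℂ) ≠ 0 := by exact_mod_cast ne_of_gt hmus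
  have h3 : (τ : ℂ) ≠ 0 := by exact_mod_cast hτ
  have h4 : (ξ1 : ℂ) ≠ 0 := by exact_mod_cast hξ1
  have h5 : (ξ3f : ℂ) ≠ 0 := by exact_mod_cast hξ3f0
  exact mul_ne_zero (mul_ne_zero (mul_ne_zero (mul_ne_zero (mul_ne_zero
    (mul_ne_zero (by norm_num) h1) h2) h3) h4) h5) htp0
end

section
/- Let M_eh be the 3×3 complex matrix [[τξ₁, τξ̃₃ᵖ, −ρ_f⁻¹ξ₃ᶠ], [2μ_sξ₁² − ρ_sτ², 2μ_sξ₁ξ̃₃ᵖ, 0], [2μ_sξ₁ξ̃₃ˢ, −2μ_sξ₁² + ρ_sτ², τ]]. Then det M_eh = i·τ⁴ρ_s√(ξ₁² − τ²/c_p²) + ρ_f⁻¹√(τ²/c_f² − ξ₁²)·((2μ_sξ₁² − ρ_sτ²)² − 4μ_s²ξ₁²√(ξ₁² − τ²/c_s²)·√(ξ₁² − τ²/c_p²)). -/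
/-- Determinant of the elliptic-hyperbolic transmission matrix. -/
theorem det_elliptic_hyperbolic
    (lams mus rhos lamf rhof : ℝ)
    (hlams : 0 < lams) (hmus : 0 < mus) (hrhos : 0 < rhos)
    (hlamf : 0 < lamf) (hrhof : 0 < rhof)
    (cs cp cf : ℝ)
    (hcs : cs = Real.sqrt (mus / rhos))
    (hcp : cp = Real.sqrt ((lams + 2 * mus) / rhos))
    (hcf : cf = Real.sqrt (lamf / rhof))
    (ξ1 τ : ℝ)
    (hes : τ ^ 2 < cs ^ 2 * ξ1 ^ 2) (hhf : cf ^ 2 * ξ1 ^ 2 < τ ^ 2)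
    (hτ : τ ≠ 0) (hξ1 : ξ1 ≠ 0)
    (tξ3s tξ3p : ℂ)
    (htξ3s : tξ3s = Complex.I * Real.sqrt (ξ1 ^ 2 - τ ^ 2 / cs ^ 2))
    (htξ3p : tξ3p = Complex.I * Real.sqrt (ξ1 ^ 2 - τ ^ 2 / cp ^ 2))
    (ξ3f : ℝ)
    (hξ3f : ξ3f = Real.sqrt (τ ^ 2 / cf ^ 2 - ξ1 ^ 2))
    (M : Matrix (Fin 3) (Fin 3) ℂ)
    (hM : M = (!![τ * ξ1, τ * tξ3p, -(rhof⁻¹ * ξ3f);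
                 2 * mus * ξ1 ^ 2 - rhos * τ ^ 2, 2 * mus * ξ1 * tξ3p, 0;
                 2 * mus * ξ1 * tξ3s, -(2 * mus * ξ1 ^ 2) + rhos * τ ^ 2, τ]
        : Matrix (Fin 3) (Fin 3) ℂ)) :
    M.det = Complex.I * ((τ ^ 4 * rhos * Real.sqrt (ξ1 ^ 2 - τ ^ 2 / cp ^ 2) : ℝ) : ℂ)
        + ((rhof⁻¹ * Real.sqrt (τ ^ 2 / cf ^ 2 - ξ1 ^ 2)
            * ((2 * mus * ξ1 ^ 2 - rhos * τ ^ 2) ^ 2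
              - 4 * mus ^ 2 * ξ1 ^ 2 * Real.sqrt (ξ1 ^ 2 - τ ^ 2 / cs ^ 2)
                  * Real.sqrt (ξ1 ^ 2 - τ ^ 2 / cp ^ 2)) : ℝ) : ℂ) := by
  subst hM htξ3s htξ3p hξ3f
  simp only [Matrix.det_fin_three, Matrix.cons_val', Matrix.cons_val_zero, Matrix.cons_val_one,
    Matrix.head_cons, Matrix.head_fin_const, Matrix.empty_val', Matrix.cons_val_fin_one,
    Matrix.cons_val_two, Matrix.tail_cons, Matrix.of_apply, Matrix.cons_val_succ]
  push_cast
  linear_combination (4 * (ξ1:ℂ) ^ 2 * mus ^ 2 * (rhof:ℂ)⁻¹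
      * (Real.sqrt (τ ^ 2 / cf ^ 2 - ξ1 ^ 2) : ℝ)
      * (Real.sqrt (ξ1 ^ 2 - τ ^ 2 / cs ^ 2) : ℝ)
      * (Real.sqrt (ξ1 ^ 2 - τ ^ 2 / cp ^ 2) : ℝ)) * Complex.I_sq
end

section
/- Let M_eh be the 3×3 complex matrix [[τξ₁, τξ̃₃ᵖ, −ρ_f⁻¹ξ₃ᶠ], [2μ_sξ₁² − ρ_sτ², 2μ_sξ₁ξ̃₃ᵖ, 0], [2μ_sξ₁ξ̃₃ˢ, −2μ_sξ₁² + ρ_sτ², τ]]. Then the imaginary part of det M_eh equals τ⁴ρ_s√(ξ₁² − τ²/c_p²) > 0; in particular M_eh is invertible, so in the elliptic-hyperbolic region the outgoing acoustic wave and the evanescent waves in the solid are uniquely determined by the incoming acoustic wave at the principal symbol level. -/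
/-- The elliptic-hyperbolic transmission matrix has determinant with
positive imaginary part, hence is invertible. -/
theorem det_elliptic_hyperbolic_invertible
    (lams mus rhos lamf rhof : ℝ)
    (hlams : 0 < lams) (hmus : 0 < mus) (hrhos : 0 < rhos)
    (hlamf : 0 < lamf) (hrhof : 0 < rhof)
    (cs cp cf : ℝ)
    (hcs : cs = Real.sqrt (mus / rhos))
    (hcp : cp = Real.sqrt ((lams + 2 * mus) / rhos))
    (hcf : cf = Real.sqrt (lamf / rhof))
    (ξ1 τ : ℝ)
    (hes : τ ^ 2 < cs ^ 2 * ξ1 ^ 2) (hhf : cf ^ 2 * ξ1 ^ 2 < τ ^ 2)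
    (hτ : τ ≠ 0) (hξ1 : ξ1 ≠ 0)
    (tξ3s tξ3p : ℂ)
    (htξ3s : tξ3s = Complex.I * Real.sqrt (ξ1 ^ 2 - τ ^ 2 / cs ^ 2))
    (htξ3p : tξ3p = Complex.I * Real.sqrt (ξ1 ^ 2 - τ ^ 2 / cp ^ 2))
    (ξ3f : ℝ)
    (hξ3f : ξ3f = Real.sqrt (τ ^ 2 / cf ^ 2 - ξ1 ^ 2))
    (M : Matrix (Fin 3) (Fin 3) ℂ)
    (hM : M = (!![τ * ξ1, τ * tξ3p, -(rhof⁻¹ * ξ3f);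
                 2 * mus * ξ1 ^ 2 - rhos * τ ^ 2, 2 * mus * ξ1 * tξ3p, 0;
                 2 * mus * ξ1 * tξ3s, -(2 * mus * ξ1 ^ 2) + rhos * τ ^ 2, τ]
        : Matrix (Fin 3) (Fin 3) ℂ)) :
    M.det.im = τ ^ 4 * rhos * Real.sqrt (ξ1 ^ 2 - τ ^ 2 / cp ^ 2)
      ∧ 0 < M.det.im
      ∧ IsUnit M := by
  have hcs2 : cs ^ 2 = mus / rhos := by
    rw [hcs, Real.sq_sqrt (le_of_lt (div_pos hmus hrhos))]
  have hcp2 : cp ^ 2 = (lams + 2 * mus) / rhos := by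
    rw [hcp, Real.sq_sqrt (le_of_lt (div_pos (by linarith) hrhos))]
  have hcs2pos : 0 < cs ^ 2 := hcs2 ▸ div_pos hmus hrhos
  have hcp2pos : 0 < cp ^ 2 := hcp2 ▸ div_pos (by linarith) hrhos
  have hle : cs ^ 2 ≤ cp ^ 2 := by
    rw [hcs2, hcp2]; gcongr <;> linarith
  have hpos : 0 < ξ1 ^ 2 - τ ^ 2 / cp ^ 2 := by
    have h1 : τ ^ 2 / cp ^ 2 ≤ τ ^ 2 / cs ^ 2 :=
      div_le_div_of_nonneg_left (sq_nonneg τ) hcs2pos hle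
    have h2 : τ ^ 2 / cs ^ 2 < ξ1 ^ 2 := by
      rw [div_lt_iff₀ hcs2pos]; linarith [hes]
    linarith
  have hb : 0 < Real.sqrt (ξ1 ^ 2 - τ ^ 2 / cp ^ 2) := Real.sqrt_pos.mpr hpos
  have him : M.det.im = τ ^ 4 * rhos * Real.sqrt (ξ1 ^ 2 - τ ^ 2 / cp ^ 2) := by
    subst hM htξ3s htξ3p
    simp [Matrix.det_fin_three, Complex.add_im, Complex.mul_im, Complex.mul_re,
      Complex.sub_im, Complex.sub_re, Complex.neg_im, Complex.neg_re,
      ← Complex.ofReal_pow]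
    ring
  refine ⟨him, him ▸ by positivity, ?_⟩
  rw [Matrix.isUnit_iff_isUnit_det, isUnit_iff_ne_zero]
  intro h
  rw [h] at him
  simp at him
  rcases him with (h1 | h1) | h1
  · exact hτ h1
  · exact hrhos.ne' h1
  · exact hb.ne' h1
end

section
/- Let M_he be the 3×3 complex matrix [[τξ₁, τξ₃ᵖ, −ρ_f⁻¹ξ̃₃ᶠ], [2μ_sξ₁² − ρ_sτ², 2μ_sξ₁ξ₃ᵖ, 0], [2μ_sξ₁ξ₃ˢ, −2μ_sξ₁² + ρ_sτ², τ]]. Then the real part of det M_he equals τ⁴ρ_sξ₃ᵖ > 0; in particular M_he is invertible, so the hyperbolic-elliptic transmission system is uniquely solvable at the principal symbol level. -/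
/-- The hyperbolic-elliptic transmission matrix has determinant with
positive real part, hence is invertible. -/
theorem det_hyperbolic_elliptic_invertible
    (lams mus rhos lamf rhof : ℝ)
    (hlams : 0 < lams) (hmus : 0 < mus) (hrhos : 0 < rhos)
    (hlamf : 0 < lamf) (hrhof : 0 < rhof)
    (cs cp cf : ℝ)
    (hcs : cs = Real.sqrt (mus / rhos))
    (hcp : cp = Real.sqrt ((lams + 2 * mus) / rhos))
    (hcf : cf = Real.sqrt (lamf / rhof))
    (ξ1 τ : ℝ)
    (hhp : cp ^ 2 * ξ1 ^ 2 < τ ^ 2) (hef : τ ^ 2 < cf ^ 2 * ξ1 ^ 2)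
    (hξ1 : ξ1 ≠ 0) (hτ : τ ≠ 0)
    (ξ3s ξ3p : ℝ)
    (hξ3s : ξ3s = Real.sqrt (τ ^ 2 / cs ^ 2 - ξ1 ^ 2))
    (hξ3p : ξ3p = Real.sqrt (τ ^ 2 / cp ^ 2 - ξ1 ^ 2))
    (tξ3f : ℂ)
    (htξ3f : tξ3f = Complex.I * Real.sqrt (ξ1 ^ 2 - τ ^ 2 / cf ^ 2))
    (M : Matrix (Fin 3) (Fin 3) ℂ)
    (hM : M = (!![τ * ξ1, τ * ξ3p, -(rhof⁻¹ * tξ3f);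
                 2 * mus * ξ1 ^ 2 - rhos * τ ^ 2, 2 * mus * ξ1 * ξ3p, 0;
                 2 * mus * ξ1 * ξ3s, -(2 * mus * ξ1 ^ 2) + rhos * τ ^ 2, τ]
        : Matrix (Fin 3) (Fin 3) ℂ)) :
    M.det.re = τ ^ 4 * rhos * ξ3p
      ∧ 0 < M.det.re
      ∧ IsUnit M := by
  have hcp' : 0 < cp := by
    rw [hcp]; exact Real.sqrt_pos.2 (by positivity)
  have hxp : 0 < ξ3p := by
    rw [hξ3p]
    apply Real.sqrt_pos.2
    rw [sub_pos, lt_div_iff₀ (by positivity : (0:ℝ) < cp ^ 2)]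
    linarith [hhp]
  have hre : M.det.re = τ ^ 4 * rhos * ξ3p := by
    subst hM htξ3f
    rw [Matrix.det_fin_three]
    simp [Matrix.cons_val_zero, Matrix.cons_val_one, Complex.add_re, Complex.sub_re,
      Complex.mul_re, Complex.mul_im, Complex.I_re, Complex.I_im, Complex.ofReal_re,
      Complex.ofReal_im, Complex.neg_re, Complex.neg_im, Complex.inv_re, Complex.inv_im, ← Complex.ofReal_pow]
    ring
  have hpos : 0 < M.det.re := by rw [hre]; positivity
  refine ⟨hre, hpos, ?_⟩
  rw [Matrix.isUnit_iff_isUnit_det, isUnit_iff_ne_zero]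
  intro h
  rw [h] at hpos
  simp at hpos
end

section
/- Let M_me be the 3×3 complex matrix [[τξ₁, 2τξ̃₃ᵖ, −ρ_f⁻¹ξ̃₃ᶠ], [2μ_sξ₁² − ρ_sτ², 4μ_sξ₁ξ̃₃ᵖ, 0], [2μ_sξ₁ξ₃ˢ, −4μ_sξ₁² + 2ρ_sτ², τ]]. Then the real part of det M_me equals −8μ_s²ρ_f⁻¹ξ₁²ξ₃ˢ·√(ξ₁² − τ²/c_p²)·√(ξ₁² − τ²/c_f²) ≠ 0 (equivalently, it equals 8μ_s²ρ_f⁻¹ξ₁²ξ₃ˢξ̃₃ᵖξ̃₃ᶠ); in particular M_me is invertible, so the mixed-elliptic transmission system is uniquely solvable at the principal symbol level. -/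
/-- The mixed-elliptic transmission matrix has determinant with
nonzero real part, hence is invertible. -/
theorem det_mixed_elliptic_invertible
    (lams mus rhos lamf rhof : ℝ)
    (hlams : 0 < lams) (hmus : 0 < mus) (hrhos : 0 < rhos)
    (hlamf : 0 < lamf) (hrhof : 0 < rhof)
    (cs cp cf : ℝ)
    (hcs : cs = Real.sqrt (mus / rhos))
    (hcp : cp = Real.sqrt ((lams + 2 * mus) / rhos))
    (hcf : cf = Real.sqrt (lamf / rhof))
    (ξ1 τ : ℝ)
    (hmix1 : cs ^ 2 * ξ1 ^ 2 < τ ^ 2) (hmix2 : τ ^ 2 < cp ^ 2 * ξ1 ^ 2)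
    (hef : τ ^ 2 < cf ^ 2 * ξ1 ^ 2)
    (hξ1 : ξ1 ≠ 0) (hτ : τ ≠ 0)
    (ξ3s : ℝ)
    (hξ3s : ξ3s = Real.sqrt (τ ^ 2 / cs ^ 2 - ξ1 ^ 2))
    (tξ3p tξ3f : ℂ)
    (htξ3p : tξ3p = Complex.I * Real.sqrt (ξ1 ^ 2 - τ ^ 2 / cp ^ 2))
    (htξ3f : tξ3f = Complex.I * Real.sqrt (ξ1 ^ 2 - τ ^ 2 / cf ^ 2))
    (M : Matrix (Fin 3) (Fin 3) ℂ)
    (hM : M = (!![τ * ξ1, 2 * τ * tξ3p, -(rhof⁻¹ * tξ3f);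
                 2 * mus * ξ1 ^ 2 - rhos * τ ^ 2, 4 * mus * ξ1 * tξ3p, 0;
                 2 * mus * ξ1 * ξ3s, -(4 * mus * ξ1 ^ 2) + 2 * rhos * τ ^ 2, τ]
        : Matrix (Fin 3) (Fin 3) ℂ)) :
    M.det.re = -(8 * mus ^ 2 * rhof⁻¹ * ξ1 ^ 2 * ξ3s
        * Real.sqrt (ξ1 ^ 2 - τ ^ 2 / cp ^ 2) * Real.sqrt (ξ1 ^ 2 - τ ^ 2 / cf ^ 2))
      ∧ M.det.re ≠ 0
      ∧ IsUnit M := by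
  set A : ℝ := Real.sqrt (ξ1 ^ 2 - τ ^ 2 / cp ^ 2) with hA
  set B : ℝ := Real.sqrt (ξ1 ^ 2 - τ ^ 2 / cf ^ 2) with hB
  have hcp2 : (0:ℝ) < cp ^ 2 := by
    rw [hcp, Real.sq_sqrt (by positivity)]; positivity
  have hcf2 : (0:ℝ) < cf ^ 2 := by
    rw [hcf, Real.sq_sqrt (by positivity)]; positivity
  have hcs2 : (0:ℝ) < cs ^ 2 := by
    rw [hcs, Real.sq_sqrt (by positivity)]; positivity
  have hApos : 0 < A := by
    apply Real.sqrt_pos.2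
    have := (div_lt_iff₀ hcp2).2 (by linarith : τ ^ 2 < ξ1 ^ 2 * cp ^ 2)
    linarith
  have hBpos : 0 < B := by
    apply Real.sqrt_pos.2
    have := (div_lt_iff₀ hcf2).2 (by linarith : τ ^ 2 < ξ1 ^ 2 * cf ^ 2)
    linarith
  have hspos : 0 < ξ3s := by
    rw [hξ3s]
    apply Real.sqrt_pos.2
    have := (lt_div_iff₀ hcs2).2 (by linarith : ξ1 ^ 2 * cs ^ 2 < τ ^ 2)
    linarith
  have hdet : M.det = Complex.ofReal (-(8 * mus ^ 2 * rhof⁻¹ * ξ1 ^ 2 * ξ3s * A * B))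
      + Complex.I * Complex.ofReal (2 * rhos * τ ^ 4 * A
        + 2 * rhof⁻¹ * (2 * mus * ξ1 ^ 2 - rhos * τ ^ 2) ^ 2 * B) := by
    subst hM htξ3p htξ3f
    rw [Matrix.det_fin_three]
    norm_num [Matrix.cons_val_zero, Matrix.cons_val_one, Matrix.head_cons, Matrix.cons_val_two,
      Matrix.tail_cons, Matrix.head_fin_const]
    push_cast
    linear_combination ((8:ℂ) * mus ^ 2 * rhof⁻¹ * ξ1 ^ 2 * ξ3s * A * B) * Complex.I_sq
  have hre : M.det.re = -(8 * mus ^ 2 * rhof⁻¹ * ξ1 ^ 2 * ξ3s * A * B) := by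
    rw [hdet]
    simp only [Complex.add_re, Complex.mul_re, Complex.I_re, Complex.I_im, Complex.ofReal_re,
      Complex.ofReal_im]
    ring
  have hne : M.det.re ≠ 0 := by
    rw [hre]
    have : 0 < 8 * mus ^ 2 * rhof⁻¹ * ξ1 ^ 2 * ξ3s * A * B := by positivity
    linarith
  refine ⟨hre, hne, ?_⟩
  rw [Matrix.isUnit_iff_isUnit_det, isUnit_iff_ne_zero]
  intro h
  exact hne (by rw [h]; rfl)
end

section
/- Let A_ee be the 3×3 complex matrix [[τξ₁, τξ̃₃ᵖ, −ρ_f⁻¹ξ̃₃ᶠ], [2μ_sξ₁² − ρ_sτ², 2μ_sξ₁ξ̃₃ᵖ, 0], [2μ_sξ₁ξ̃₃ˢ, −2μ_sξ₁² + ρ_sτ², τ]]. Then det A_ee = i·[τ⁴ρ_s√(ξ₁² − τ²/c_p²) + ρ_f⁻¹√(ξ₁² − τ²/c_f²)·((2μ_sξ₁² − ρ_sτ²)² − 4μ_s²ξ₁²√(ξ₁² − τ²/c_s²)·√(ξ₁² − τ²/c_p²))]; in particular det A_ee is purely imaginary. -/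
/-- The determinant of the elliptic-elliptic transmission matrix is
purely imaginary, with the stated formula. -/
theorem det_elliptic_elliptic
    (lams mus rhos lamf rhof : ℝ)
    (hlams : 0 < lams) (hmus : 0 < mus) (hrhos : 0 < rhos)
    (hlamf : 0 < lamf) (hrhof : 0 < rhof)
    (cs cp cf : ℝ)
    (hcs : cs = Real.sqrt (mus / rhos))
    (hcp : cp = Real.sqrt ((lams + 2 * mus) / rhos))
    (hcf : cf = Real.sqrt (lamf / rhof))
    (ξ1 τ : ℝ)
    (hes : τ ^ 2 < cs ^ 2 * ξ1 ^ 2) (hef : τ ^ 2 < cf ^ 2 * ξ1 ^ 2)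
    (hξ1 : ξ1 ≠ 0)
    (tξ3s tξ3p tξ3f : ℂ)
    (htξ3s : tξ3s = Complex.I * Real.sqrt (ξ1 ^ 2 - τ ^ 2 / cs ^ 2))
    (htξ3p : tξ3p = Complex.I * Real.sqrt (ξ1 ^ 2 - τ ^ 2 / cp ^ 2))
    (htξ3f : tξ3f = Complex.I * Real.sqrt (ξ1 ^ 2 - τ ^ 2 / cf ^ 2))
    (A : Matrix (Fin 3) (Fin 3) ℂ)
    (hA : A = (!![τ * ξ1, τ * tξ3p, -(rhof⁻¹ * tξ3f);
                 2 * mus * ξ1 ^ 2 - rhos * τ ^ 2, 2 * mus * ξ1 * tξ3p, 0;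
                 2 * mus * ξ1 * tξ3s, -(2 * mus * ξ1 ^ 2) + rhos * τ ^ 2, τ]
        : Matrix (Fin 3) (Fin 3) ℂ)) :
    A.det = Complex.I *
        ((τ ^ 4 * rhos * Real.sqrt (ξ1 ^ 2 - τ ^ 2 / cp ^ 2)
          + rhof⁻¹ * Real.sqrt (ξ1 ^ 2 - τ ^ 2 / cf ^ 2)
            * ((2 * mus * ξ1 ^ 2 - rhos * τ ^ 2) ^ 2
              - 4 * mus ^ 2 * ξ1 ^ 2 * Real.sqrt (ξ1 ^ 2 - τ ^ 2 / cs ^ 2)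
                  * Real.sqrt (ξ1 ^ 2 - τ ^ 2 / cp ^ 2)) : ℝ) : ℂ)
      ∧ A.det.re = 0 := by
  have hdet : A.det = Complex.I *
        ((τ ^ 4 * rhos * Real.sqrt (ξ1 ^ 2 - τ ^ 2 / cp ^ 2)
          + rhof⁻¹ * Real.sqrt (ξ1 ^ 2 - τ ^ 2 / cf ^ 2)
            * ((2 * mus * ξ1 ^ 2 - rhos * τ ^ 2) ^ 2
              - 4 * mus ^ 2 * ξ1 ^ 2 * Real.sqrt (ξ1 ^ 2 - τ ^ 2 / cs ^ 2)
                  * Real.sqrt (ξ1 ^ 2 - τ ^ 2 / cp ^ 2)) : ℝ) : ℂ) := by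
    subst hA htξ3s htξ3p htξ3f
    simp only [Matrix.det_fin_three, Matrix.cons_val', Matrix.cons_val_zero,
      Matrix.empty_val', Matrix.cons_val_fin_one, Matrix.cons_val_one, Matrix.head_cons,
      Matrix.head_fin_const, Matrix.cons_val_two, Matrix.tail_cons, Matrix.of_apply]
    push_cast
    ring_nf
    rw [show Complex.I ^ 3 = -Complex.I by
      rw [pow_succ, Complex.I_sq]; ring]
    ring
  refine ⟨hdet, ?_⟩
  rw [hdet]
  simp only [Complex.mul_re, Complex.I_re, Complex.I_im, Complex.ofReal_re,
    Complex.ofReal_im, zero_mul, one_mul, zero_sub, neg_eq_zero]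
end

section
/- Assume moreover ξ₁ > 0 and set z = τ²/ξ₁². Then −i·det A_ee = ξ₁⁵·[z²ρ_s√(1 − z/c_p²) + ρ_f⁻¹√(1 − z/c_f²)·((2μ_s − ρ_s z)² − 4μ_s²√(1 − z/c_s²)·√(1 − z/c_p²))]. In particular, det A_ee = 0 if and only if z satisfies the secular equation for Scholte waves z²ρ_s√(1 − z/c_p²) + ρ_f⁻¹√(1 − z/c_f²)·((2μ_s − ρ_s z)² − 4μ_s²√(1 − z/c_s²)·√(1 − z/c_p²)) = 0. -/
/-!
Expanding the determinant along its first row gives `ρ_s τ⁴ ξ̃₃ᵖ + ρ_f⁻¹ ξ̃₃ᶠ ((2μ_s ξ₁² − ρ_s τ²)² + 4μ_s² ξ₁² ξ̃₃ˢ ξ̃₃ᵖ)`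
for arbitrary entries. Each `ξ̃₃` is `i ξ₁` times a real square root in `z`, and `τ² = z ξ₁²`, so every term
carries `i ξ₁⁵`; the product `ξ̃₃ˢ ξ̃₃ᵖ` contributes `i² = −1`, which is the sign in the secular equation.
-/

open Complex

lemma Real.sqrt_sq_sub_div_sq {ξ : ℝ} (hξ : 0 < ξ) (τ c : ℝ) :
    √(ξ ^ 2 - τ ^ 2 / c ^ 2) = ξ * √(1 - τ ^ 2 / ξ ^ 2 / c ^ 2) := by
  rw [← Real.sqrt_sq hξ.le, ← Real.sqrt_mul (sq_nonneg ξ), Real.sqrt_sq hξ.le]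
  congr 1
  field_simp

lemma Matrix.det_scholte {R : Type*} [CommRing R] (τ ξ μ ρ q s p f : R) :
    (!![τ * ξ, τ * p, -(q * f);
        2 * μ * ξ ^ 2 - ρ * τ ^ 2, 2 * μ * ξ * p, 0;
        2 * μ * ξ * s, -(2 * μ * ξ ^ 2) + ρ * τ ^ 2, τ] : Matrix (Fin 3) (Fin 3) R).det
      = ρ * τ ^ 4 * p + q * f * ((2 * μ * ξ ^ 2 - ρ * τ ^ 2) ^ 2 + 4 * μ ^ 2 * ξ ^ 2 * s * p) := by
  rw [Matrix.det_fin_three]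
  simp only [Matrix.of_apply, Matrix.cons_val', Matrix.cons_val_zero, Matrix.cons_val_one,
    Matrix.cons_val_two, Matrix.empty_val', Matrix.cons_val_fin_one, Matrix.head_cons,
    Matrix.tail_cons, Matrix.head_fin_const]
  ring

lemma scholte_expansion_eq_I_mul_secular {R : Type*} [CommRing R] {i τ ξ z : R} (hi : i ^ 2 = -1)
    (hτ : τ ^ 2 = z * ξ ^ 2) (μ ρ q S P F : R) :
    ρ * τ ^ 4 * (i * (ξ * P)) + q * (i * (ξ * F)) *
        ((2 * μ * ξ ^ 2 - ρ * τ ^ 2) ^ 2 + 4 * μ ^ 2 * ξ ^ 2 * (i * (ξ * S)) * (i * (ξ * P)))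
      = i * ξ ^ 5 * (z ^ 2 * ρ * P + q * F * ((2 * μ - ρ * z) ^ 2 - 4 * μ ^ 2 * S * P)) := by
  have hτ4 : τ ^ 4 = z ^ 2 * ξ ^ 4 := by rw [show τ ^ 4 = (τ ^ 2) ^ 2 by ring, hτ]; ring
  rw [hτ4, hτ]
  linear_combination 4 * q * F * μ ^ 2 * ξ ^ 5 * S * P * i * hi

theorem det_elliptic_elliptic_secular_general
    (mus rhos rhof : ℝ)
    (cs cp cf : ℝ)
    (ξ1 τ : ℝ)
    (tξ3s tξ3p tξ3f : ℂ)
    (htξ3s : tξ3s = Complex.I * Real.sqrt (ξ1 ^ 2 - τ ^ 2 / cs ^ 2))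
    (htξ3p : tξ3p = Complex.I * Real.sqrt (ξ1 ^ 2 - τ ^ 2 / cp ^ 2))
    (htξ3f : tξ3f = Complex.I * Real.sqrt (ξ1 ^ 2 - τ ^ 2 / cf ^ 2))
    (A : Matrix (Fin 3) (Fin 3) ℂ)
    (hA : A = (!![τ * ξ1, τ * tξ3p, -(rhof⁻¹ * tξ3f);
                 2 * mus * ξ1 ^ 2 - rhos * τ ^ 2, 2 * mus * ξ1 * tξ3p, 0;
                 2 * mus * ξ1 * tξ3s, -(2 * mus * ξ1 ^ 2) + rhos * τ ^ 2, τ]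
        : Matrix (Fin 3) (Fin 3) ℂ))
    (hξ1pos : 0 < ξ1)
    (z : ℝ) (hz : z = τ ^ 2 / ξ1 ^ 2) :
    -Complex.I * A.det = ((ξ1 ^ 5 : ℝ) : ℂ) *
        ((z ^ 2 * rhos * Real.sqrt (1 - z / cp ^ 2)
          + rhof⁻¹ * Real.sqrt (1 - z / cf ^ 2)
            * ((2 * mus - rhos * z) ^ 2
              - 4 * mus ^ 2 * Real.sqrt (1 - z / cs ^ 2)
                  * Real.sqrt (1 - z / cp ^ 2)) : ℝ) : ℂ)
      ∧ (A.det = 0 ↔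
          z ^ 2 * rhos * Real.sqrt (1 - z / cp ^ 2)
            + rhof⁻¹ * Real.sqrt (1 - z / cf ^ 2)
              * ((2 * mus - rhos * z) ^ 2
                - 4 * mus ^ 2 * Real.sqrt (1 - z / cs ^ 2)
                    * Real.sqrt (1 - z / cp ^ 2)) = 0) := by
  have hτ : (τ : ℂ) ^ 2 = z * (ξ1 : ℂ) ^ 2 := by
    exact_mod_cast (hz ▸ div_mul_cancel₀ (τ ^ 2) (pow_ne_zero 2 hξ1pos.ne')).symm
  have hdet : A.det = I * ((ξ1 ^ 5 : ℝ) : ℂ) *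
      ((z ^ 2 * rhos * Real.sqrt (1 - z / cp ^ 2)
          + rhof⁻¹ * Real.sqrt (1 - z / cf ^ 2)
            * ((2 * mus - rhos * z) ^ 2
              - 4 * mus ^ 2 * Real.sqrt (1 - z / cs ^ 2)
                  * Real.sqrt (1 - z / cp ^ 2)) : ℝ) : ℂ) := by
    rw [hA, Matrix.det_scholte, htξ3s, htξ3p, htξ3f, Real.sqrt_sq_sub_div_sq hξ1pos,
      Real.sqrt_sq_sub_div_sq hξ1pos, Real.sqrt_sq_sub_div_sq hξ1pos, ← hz]
    push_cast
    exact scholte_expansion_eq_I_mul_secular I_sq hτ _ _ _ _ _ _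
  refine ⟨by rw [hdet, ← mul_assoc, ← mul_assoc, neg_mul, I_mul_I, neg_neg, one_mul], ?_⟩
  rw [hdet, mul_eq_zero, mul_eq_zero, ofReal_eq_zero, ofReal_eq_zero]
  simp [I_ne_zero, hξ1pos.ne']

/-- Factoring the elliptic-elliptic determinant through the secular
equation for Scholte waves, with z = τ²/ξ₁². -/
theorem det_elliptic_elliptic_secular
    (lams mus rhos lamf rhof : ℝ)
    (hlams : 0 < lams) (hmus : 0 < mus) (hrhos : 0 < rhos)
    (hlamf : 0 < lamf) (hrhof : 0 < rhof)
    (cs cp cf : ℝ)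
    (hcs : cs = Real.sqrt (mus / rhos))
    (hcp : cp = Real.sqrt ((lams + 2 * mus) / rhos))
    (hcf : cf = Real.sqrt (lamf / rhof))
    (ξ1 τ : ℝ)
    (hes : τ ^ 2 < cs ^ 2 * ξ1 ^ 2) (hef : τ ^ 2 < cf ^ 2 * ξ1 ^ 2)
    (hξ1 : ξ1 ≠ 0)
    (tξ3s tξ3p tξ3f : ℂ)
    (htξ3s : tξ3s = Complex.I * Real.sqrt (ξ1 ^ 2 - τ ^ 2 / cs ^ 2))
    (htξ3p : tξ3p = Complex.I * Real.sqrt (ξ1 ^ 2 - τ ^ 2 / cp ^ 2))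
    (htξ3f : tξ3f = Complex.I * Real.sqrt (ξ1 ^ 2 - τ ^ 2 / cf ^ 2))
    (A : Matrix (Fin 3) (Fin 3) ℂ)
    (hA : A = (!![τ * ξ1, τ * tξ3p, -(rhof⁻¹ * tξ3f);
                 2 * mus * ξ1 ^ 2 - rhos * τ ^ 2, 2 * mus * ξ1 * tξ3p, 0;
                 2 * mus * ξ1 * tξ3s, -(2 * mus * ξ1 ^ 2) + rhos * τ ^ 2, τ]
        : Matrix (Fin 3) (Fin 3) ℂ))
    (hξ1pos : 0 < ξ1)
    (z : ℝ) (hz : z = τ ^ 2 / ξ1 ^ 2) :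
    -Complex.I * A.det = ((ξ1 ^ 5 : ℝ) : ℂ) *
        ((z ^ 2 * rhos * Real.sqrt (1 - z / cp ^ 2)
          + rhof⁻¹ * Real.sqrt (1 - z / cf ^ 2)
            * ((2 * mus - rhos * z) ^ 2
              - 4 * mus ^ 2 * Real.sqrt (1 - z / cs ^ 2)
                  * Real.sqrt (1 - z / cp ^ 2)) : ℝ) : ℂ)
      ∧ (A.det = 0 ↔
          z ^ 2 * rhos * Real.sqrt (1 - z / cp ^ 2)
            + rhof⁻¹ * Real.sqrt (1 - z / cf ^ 2)
              * ((2 * mus - rhos * z) ^ 2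
                - 4 * mus ^ 2 * Real.sqrt (1 - z / cs ^ 2)
                    * Real.sqrt (1 - z / cp ^ 2)) = 0) :=
  det_elliptic_elliptic_secular_general mus rhos rhof cs cp cf ξ1 τ tξ3s tξ3p tξ3f htξ3s htξ3p htξ3f
    A hA hξ1pos z hz
end

section
/- (Existence of Scholte waves.) For any positive real numbers ρ_s, μ_s, λ_s, ρ_f, λ_f, setting c_s² = μ_s/ρ_s, c_p² = (λ_s + 2μ_s)/ρ_s and c_f² = λ_f/ρ_f, there exists a real number z with 0 < z < min{c_s², c_f²} such that z²ρ_s√(1 − z/c_p²) + ρ_f⁻¹√(1 − z/c_f²)·((2μ_s − ρ_s z)² − 4μ_s²√(1 − z/c_s²)·√(1 − z/c_p²)) = 0. (The square root z = c_Sc of such a root is the Scholte wave speed, satisfying 0 < c_Sc < min{c_s, c_f}.) -/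
/-!
The secular function `F` vanishes at `z = 0`, since there `(2μ_s)² = 4μ_s² · 1 · 1`.
Its slope at `0` is `2μ_s² ρ_f⁻¹ (1/c_p² − 1/c_s²) < 0`, so `F` is negative just to the
right of `0`. At `z = min{c_s², c_f²}` one of the factors `√(1 − z/c_s²)`, `√(1 − z/c_f²)`
vanishes, which leaves `F` strictly positive. The intermediate value theorem gives a root
in between.
-/

open Set Filter Topology

theorem exists_mem_Ioo_eq_zero_of_hasDerivAt_neg {f : ℝ → ℝ} {a b D : ℝ} (hab : a < b)
    (hf : ContinuousOn f (Icc a b)) (hfa : f a = 0) (hD : HasDerivAt f D a) (hDneg : D < 0)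
    (hfb : 0 < f b) : ∃ z ∈ Ioo a b, f z = 0 := by
  have hsign : ∀ᶠ x in 𝓝 a, SignType.sign (f x) = SignType.sign (a - x) :=
    eventually_nhdsWithin_sign_eq_of_deriv_neg (hD.deriv ▸ hDneg) hfa
  obtain ⟨c, hc_sign, hc⟩ :=
    ((hsign.filter_mono nhdsWithin_le_nhds).and (Ioo_mem_nhdsGT hab)).exists
  have hfc : f c < 0 := by
    rwa [sign_neg (sub_neg.mpr hc.1), sign_eq_neg_one_iff] at hc_sign
  obtain ⟨z, hz, hfz⟩ := intermediate_value_Ioo hc.2.le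
    (hf.mono (Icc_subset_Icc hc.1.le le_rfl)) ⟨hfc, hfb⟩
  exact ⟨z, ⟨hc.1.trans hz.1, hz.2⟩, hfz⟩

theorem hasDerivAt_sqrt_one_sub_div_zero (a : ℝ) :
    HasDerivAt (fun z : ℝ => √(1 - z / a)) (-(2 * a)⁻¹) 0 := by
  have hinner : HasDerivAt (fun z : ℝ => 1 - z / a) (-a⁻¹) 0 := by
    simpa [div_eq_mul_inv] using ((hasDerivAt_id (0 : ℝ)).div_const a).const_sub 1
  have hsqrt := Real.hasDerivAt_sqrt (by norm_num : (1 - 0 / a : ℝ) ≠ 0)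
  refine (hsqrt.comp 0 hinner).congr_deriv ?_
  simp only [zero_div, sub_zero, Real.sqrt_one]
  ring

noncomputable def scholteSecular (rhos mus rhof cs2 cp2 cf2 z : ℝ) : ℝ :=
  z ^ 2 * rhos * √(1 - z / cp2)
    + rhof⁻¹ * √(1 - z / cf2)
      * ((2 * mus - rhos * z) ^ 2 - 4 * mus ^ 2 * √(1 - z / cs2) * √(1 - z / cp2))

section scholteSecular

variable (rhos mus rhof cs2 cp2 cf2 : ℝ)

theorem continuous_scholteSecular : Continuous (scholteSecular rhos mus rhof cs2 cp2 cf2) := by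
  unfold scholteSecular
  fun_prop

theorem scholteSecular_zero : scholteSecular rhos mus rhof cs2 cp2 cf2 0 = 0 := by
  simp only [scholteSecular, zero_div, sub_zero, Real.sqrt_one]
  ring

theorem hasDerivAt_scholteSecular_zero :
    HasDerivAt (scholteSecular rhos mus rhof cs2 cp2 cf2)
      (rhof⁻¹ * (2 * mus ^ 2 * (cs2⁻¹ + cp2⁻¹) - 4 * mus * rhos)) 0 := by
  have hs := hasDerivAt_sqrt_one_sub_div_zero cs2
  have hp := hasDerivAt_sqrt_one_sub_div_zero cp2
  have hf := hasDerivAt_sqrt_one_sub_div_zero cf2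
  have hlin : HasDerivAt (fun z : ℝ => 2 * mus - rhos * z) (-rhos) 0 := by
    simpa using ((hasDerivAt_id (0 : ℝ)).const_mul rhos).const_sub (2 * mus)
  have h := (((hasDerivAt_pow 2 (0 : ℝ)).mul_const rhos).mul hp).add
    ((hf.const_mul rhof⁻¹).mul ((hlin.pow 2).sub ((hs.const_mul (4 * mus ^ 2)).mul hp)))
  refine h.congr_deriv ?_
  simp only [Pi.sub_apply, Pi.mul_apply, Pi.pow_apply, mul_zero, zero_div, sub_zero, Real.sqrt_one]
  ring

theorem scholteSecular_min_pos (hrhos : 0 < rhos) (hrhof : 0 ≤ rhof) (hcs : 0 < cs2)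
    (hcf : 0 < cf2) (hcp : cs2 < cp2) :
    0 < scholteSecular rhos mus rhof cs2 cp2 cf2 (min cs2 cf2) := by
  set m := min cs2 cf2
  have hmp : 0 < 1 - m / cp2 := by
    rw [sub_pos, div_lt_one (hcs.trans hcp)]
    exact (min_le_left _ _).trans_lt hcp
  have hfluid : 0 ≤ rhof⁻¹ * √(1 - m / cf2)
      * ((2 * mus - rhos * m) ^ 2 - 4 * mus ^ 2 * √(1 - m / cs2) * √(1 - m / cp2)) := by
    obtain h | h : m = cs2 ∨ m = cf2 := min_choice cs2 cf2
    · have : √(1 - m / cs2) = 0 := by rw [h, div_self hcs.ne', sub_self, Real.sqrt_zero]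
      rw [this, mul_zero, zero_mul, sub_zero]
      positivity
    · have : √(1 - m / cf2) = 0 := by rw [h, div_self hcf.ne', sub_self, Real.sqrt_zero]
      rw [this, mul_zero, zero_mul]
  have hsolid : 0 < m ^ 2 * rhos * √(1 - m / cp2) := by positivity
  exact add_pos_of_pos_of_nonneg hsolid hfluid

end scholteSecular

/-- Existence of Scholte waves: the secular equation always has a
root z with 0 < z < min{c_s², c_f²}. -/
theorem exists_scholte_root
    (rhos mus lams rhof lamf : ℝ)
    (hrhos : 0 < rhos) (hmus : 0 < mus) (hlams : 0 < lams)
    (hrhof : 0 < rhof) (hlamf : 0 < lamf)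
    (cs2 cp2 cf2 : ℝ)
    (hcs2 : cs2 = mus / rhos)
    (hcp2 : cp2 = (lams + 2 * mus) / rhos)
    (hcf2 : cf2 = lamf / rhof) :
    ∃ z : ℝ, 0 < z ∧ z < min cs2 cf2 ∧
      z ^ 2 * rhos * Real.sqrt (1 - z / cp2)
        + rhof⁻¹ * Real.sqrt (1 - z / cf2)
          * ((2 * mus - rhos * z) ^ 2
            - 4 * mus ^ 2 * Real.sqrt (1 - z / cs2) * Real.sqrt (1 - z / cp2)) = 0 := by
  have hcs : 0 < cs2 := by rw [hcs2]; positivity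
  have hcf : 0 < cf2 := by rw [hcf2]; positivity
  have hcp : cs2 < cp2 := by rw [hcs2, hcp2]; gcongr; linarith
  have hslope : rhof⁻¹ * (2 * mus ^ 2 * (cs2⁻¹ + cp2⁻¹) - 4 * mus * rhos) < 0 := by
    have hinv : cp2⁻¹ < cs2⁻¹ := inv_strictAnti₀ hcs hcp
    have hmus_cs : mus ^ 2 * cs2⁻¹ = mus * rhos := by rw [hcs2]; field_simp
    refine mul_neg_of_pos_of_neg (inv_pos.mpr hrhof) ?_
    linarith [mul_lt_mul_of_pos_left hinv (pow_pos hmus 2)]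
  obtain ⟨z, ⟨hz0, hzm⟩, hz⟩ := exists_mem_Ioo_eq_zero_of_hasDerivAt_neg (lt_min hcs hcf)
    (continuous_scholteSecular ..).continuousOn (scholteSecular_zero ..)
    (hasDerivAt_scholteSecular_zero ..) hslope
    (scholteSecular_min_pos _ mus _ _ _ _ hrhos hrhof.le hcs hcf hcp)
  exact ⟨z, hz0, hzm, hz⟩
end
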